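/- arXiv:1904.03060 — 2 statements merged into one kernel-verified Lean document; each statement's English description precedes it below -/
import Mathlib

section
/- Let p ≥ 5 be an odd integer. For every real x ≥ 2, ((1 - 1/(4x))² + 1/(8x²))^{-1/p - 1} · (1 - 1/(4x)) + ((1 + 1/(4x))² + 1/(8x²))^{-1/p - 1} · (1 + 1/(4x)) < 2. -/
lemma stmt9_aux (b a : ℝ) (hb : 0 < b) (ha : 1 ≤ a) (hD : 0 < 1 + a * (b - 1)) :
    b ^ (-a) ≤ (1 + a * (b - 1))⁻¹ := by
  rw [Real.rpow_neg hb.le]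
  have hbern : 1 + a * (b - 1) ≤ b ^ a := by
    have := one_add_mul_self_le_rpow_one_add (s := b - 1) (by linarith) ha
    simpa using this
  exact inv_anti₀ hD hbern

lemma stmt9_main (t a : ℝ) (ht0 : 0 < t) (ht8 : t ≤ 1/8) (ha1 : 1 < a) (ha65 : a ≤ 6/5) :
    ((1 - t)^2 + 2*t^2) ^ (-a) * (1 - t) + ((1 + t)^2 + 2*t^2) ^ (-a) * (1 + t) < 2 := by
  have hb1 : (0:ℝ) < (1 - t)^2 + 2*t^2 := by nlinarith [sq_nonneg (1 - t)]
  have hb2 : (0:ℝ) < (1 + t)^2 + 2*t^2 := by nlinarith [sq_nonneg (1 + t)]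
  have hat : a * t ≤ 3/20 := by nlinarith [mul_nonneg (by linarith : (0:ℝ) ≤ 6/5 - a) ht0.le]
  have hat2 : 0 ≤ a * t^2 := by positivity
  have hD1 : (0:ℝ) < 1 + a * (((1 - t)^2 + 2*t^2) - 1) := by nlinarith
  have hD2 : (0:ℝ) < 1 + a * (((1 + t)^2 + 2*t^2) - 1) := by nlinarith
  have h1 := mul_le_mul_of_nonneg_right (stmt9_aux _ a hb1 ha1.le hD1)
    (by linarith : (0:ℝ) ≤ 1 - t)
  have h2 := mul_le_mul_of_nonneg_right (stmt9_aux _ a hb2 ha1.le hD2)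
    (by linarith : (0:ℝ) ≤ 1 + t)
  have hkey : (1 + a * (((1 - t)^2 + 2*t^2) - 1))⁻¹ * (1 - t)
      + (1 + a * (((1 + t)^2 + 2*t^2) - 1))⁻¹ * (1 + t) < 2 := by
    rw [← div_eq_inv_mul, ← div_eq_inv_mul, div_add_div _ _ hD1.ne' hD2.ne',
      div_lt_iff₀ (by positivity)]
    nlinarith [mul_pos (mul_pos (mul_pos ht0 ht0) (by linarith : (0:ℝ) < a))
        (by linarith : (0:ℝ) < 10 - 8*a),
      mul_nonneg (mul_nonneg (sq_nonneg t) (sq_nonneg t)) (sq_nonneg a)]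
  linarith

theorem stmt9 (p : ℕ) (hp : 5 ≤ p) (hpo : Odd p) (x : ℝ) (hx : 2 ≤ x) :
    ((1 - 1/(4*x))^2 + 1/(8*x^2)) ^ (-(1 : ℝ)/p - 1) * (1 - 1/(4*x)) +
    ((1 + 1/(4*x))^2 + 1/(8*x^2)) ^ (-(1 : ℝ)/p - 1) * (1 + 1/(4*x)) < 2 := by
  have hx0 : (0:ℝ) < x := by linarith
  have hp0 : (0:ℝ) < p := by exact_mod_cast Nat.lt_of_lt_of_le (by norm_num) hp
  have hp5 : (5:ℝ) ≤ p := by exact_mod_cast hp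
  have h2t : 1/(8*x^2) = 2*(1/(4*x))^2 := by field_simp; ring
  have he : -(1:ℝ)/p - 1 = -(1 + 1/(p:ℝ)) := by ring
  rw [h2t, he]
  apply stmt9_main
  · positivity
  · rw [div_le_div_iff₀ (by positivity) (by norm_num)]; linarith
  · nlinarith [one_div_pos.mpr hp0]
  · have : 1/(p:ℝ) ≤ 1/5 := by
      apply div_le_div_of_nonneg_left (by norm_num) (by norm_num) hp5
    linarith
end

section
/- Let p ≥ 5 be an integer. The function g(x) = (2x)^{-2/p} - (1/2)(4x² - 2x + 3/4)^{-1/p} - (1/2)(4x² + 2x + 3/4)^{-1/p} is strictly decreasing on [2, ∞). -/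
/-- Bernoulli-type bound: for `C, d > 0`, `1 ≤ q` and `0 < C + q*(d-C)` we have
`d ^ (-q) ≤ C ^ (-q) * (C / (C + q*(d-C)))`. -/
lemma aux_rpow_neg_le {C d q : ℝ} (hC : 0 < C) (hd : 0 < d) (hq : 1 ≤ q)
    (hpos : 0 < C + q * (d - C)) :
    d ^ (-q) ≤ C ^ (-q) * (C / (C + q * (d - C))) := by
  have hs : -1 ≤ (d - C) / C := by
    rw [le_div_iff₀ hC]; nlinarith
  have hb := one_add_mul_self_le_rpow_one_add hs hq
  have h1 : 1 + (d - C) / C = d / C := by field_simp; ring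
  have h2 : 1 + q * ((d - C) / C) = (C + q * (d - C)) / C := by
    field_simp
  rw [h1, h2] at hb
  have hdC : (0 : ℝ) < d / C := div_pos hd hC
  have hpos' : (0 : ℝ) < (C + q * (d - C)) / C := div_pos hpos hC
  have h3 : (d / C) ^ (-q) ≤ C / (C + q * (d - C)) := by
    rw [Real.rpow_neg hdC.le]
    have := inv_anti₀ hpos' hb
    rwa [inv_div] at this
  have h4 : d ^ (-q) = (d / C) ^ (-q) * C ^ (-q) := by
    rw [← Real.mul_rpow (div_nonneg hd.le hC.le) hC.le, div_mul_cancel₀ _ hC.ne']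
  rw [h4]
  calc (d / C) ^ (-q) * C ^ (-q) ≤ (C / (C + q * (d - C))) * C ^ (-q) :=
        mul_le_mul_of_nonneg_right h3 (Real.rpow_nonneg hC.le _)
    _ = C ^ (-q) * (C / (C + q * (d - C))) := by ring

set_option maxHeartbeats 1000000 in
theorem stmt10 (p : ℕ) (hp : 5 ≤ p) :
    StrictAntiOn (fun x : ℝ =>
      (2*x) ^ (-(2 : ℝ)/p) - (1/2) * (4*x^2 - 2*x + 3/4) ^ (-(1 : ℝ)/p)
        - (1/2) * (4*x^2 + 2*x + 3/4) ^ (-(1 : ℝ)/p)) (Set.Ici (2 : ℝ)) := by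
  have hp5 : (5 : ℝ) ≤ (p : ℝ) := by exact_mod_cast hp
  have hp0 : (0 : ℝ) < (p : ℝ) := by linarith
  apply strictAntiOn_of_deriv_neg (convex_Ici 2)
  · -- continuity
    have c1 : ContinuousOn (fun x : ℝ => (2*x) ^ (-(2 : ℝ)/p)) (Set.Ici 2) := by
      apply ContinuousOn.rpow_const (by fun_prop)
      intro x hx
      have : (2 : ℝ) ≤ x := hx
      exact Or.inl (by nlinarith)
    have c2 : ContinuousOn (fun x : ℝ => (4*x^2 - 2*x + 3/4) ^ (-(1 : ℝ)/p)) (Set.Ici 2) := by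
      apply ContinuousOn.rpow_const (by fun_prop)
      intro x hx
      have : (2 : ℝ) ≤ x := hx
      exact Or.inl (by nlinarith)
    have c3 : ContinuousOn (fun x : ℝ => (4*x^2 + 2*x + 3/4) ^ (-(1 : ℝ)/p)) (Set.Ici 2) := by
      apply ContinuousOn.rpow_const (by fun_prop)
      intro x hx
      have : (2 : ℝ) ≤ x := hx
      exact Or.inl (by nlinarith)
    exact ((c1.sub (c2.const_smul (1/2 : ℝ))).sub (c3.const_smul (1/2 : ℝ))).congr
      (fun x _ => by simp [smul_eq_mul])
  · intro x hx
    rw [interior_Ici] at hx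
    have hx2 : (2 : ℝ) < x := hx
    have h2x : (0 : ℝ) < 2 * x := by linarith
    have hA : (0 : ℝ) < 4*x^2 - 2*x + 3/4 := by nlinarith
    have hB : (0 : ℝ) < 4*x^2 + 2*x + 3/4 := by nlinarith
    -- derivative computation
    have d2x : HasDerivAt (fun x : ℝ => 2*x) 2 x := by
      simpa using (hasDerivAt_id x).const_mul (2 : ℝ)
    have dA : HasDerivAt (fun x : ℝ => 4*x^2 - 2*x + 3/4) (8*x - 2) x := by
      have h1 := (hasDerivAt_pow 2 x).const_mul (4 : ℝ)
      have h2 := (hasDerivAt_id x).const_mul (2 : ℝ)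
      have := (h1.sub h2).add_const (3/4 : ℝ)
      rw [show (8*x - 2 : ℝ) = 4 * ((2:ℕ) * x ^ (2 - 1)) - 2 * 1 by push_cast; ring]
      exact this
    have dB : HasDerivAt (fun x : ℝ => 4*x^2 + 2*x + 3/4) (8*x + 2) x := by
      have h1 := (hasDerivAt_pow 2 x).const_mul (4 : ℝ)
      have h2 := (hasDerivAt_id x).const_mul (2 : ℝ)
      have := (h1.add h2).add_const (3/4 : ℝ)
      rw [show (8*x + 2 : ℝ) = 4 * ((2:ℕ) * x ^ (2 - 1)) + 2 * 1 by push_cast; ring]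
      exact this
    have t1 := d2x.rpow_const (p := -(2 : ℝ)/p) (Or.inl h2x.ne')
    have t2 := (dA.rpow_const (p := -(1 : ℝ)/p) (Or.inl hA.ne')).const_mul (1/2 : ℝ)
    have t3 := (dB.rpow_const (p := -(1 : ℝ)/p) (Or.inl hB.ne')).const_mul (1/2 : ℝ)
    have hg := (t1.sub t2).sub t3
    rw [HasDerivAt.deriv (f := fun y : ℝ => (2*y) ^ (-(2 : ℝ)/p) - (1/2) * (4*y^2 - 2*y + 3/4) ^ (-(1 : ℝ)/p)
      - (1/2) * (4*y^2 + 2*y + 3/4) ^ (-(1 : ℝ)/p)) hg]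
    -- now prove the derivative value is negative
    obtain ⟨q, hqdef⟩ : ∃ q : ℝ, q = 1 + 1/(p : ℝ) := ⟨_, rfl⟩
    have hq1 : (1 : ℝ) ≤ q := by
      have : (0 : ℝ) < 1/(p:ℝ) := by positivity
      linarith [hqdef.ge]
    have hq65 : q ≤ 6/5 := by
      have : 1/(p:ℝ) ≤ 1/5 := by
        rw [div_le_div_iff₀ hp0 (by norm_num)]; linarith
      linarith [hqdef.le]
    have e2 : -(1 : ℝ)/p - 1 = -q := by
      rw [hqdef]; ring
    have e1 : -(2 : ℝ)/p - 1 = 1 - 2*q := by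
      rw [hqdef]; ring
    rw [e1, e2]
    -- split (2x)^(1-2q) = (2x) * (4x²)^(-q)
    have hsplit : (2*x) ^ (1 - 2*q) = 2*x * (4*x^2) ^ (-q) := by
      have h1 : ((2:ℝ)*x) ^ ((2:ℕ) : ℝ) = 4*x^2 := by
        rw [Real.rpow_natCast]; ring
      have hb : ((4:ℝ)*x^2) ^ (-q) = (2*x) ^ (((2:ℕ):ℝ)*(-q)) := by
        rw [← h1, ← Real.rpow_mul h2x.le]
      rw [hb, show (1 - 2*q) = 1 + ((2:ℕ):ℝ)*(-q) by push_cast; ring,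
        Real.rpow_add h2x, Real.rpow_one]
    -- Bernoulli bounds
    have hq0 : (0 : ℝ) < q := lt_of_lt_of_le one_pos hq1
    have hD1 : (0 : ℝ) < 4*x^2 + q * ((4*x^2 - 2*x + 3/4) - 4*x^2) := by
      nlinarith [mul_le_mul_of_nonneg_right hq65 (show (0:ℝ) ≤ 2*x - 3/4 by linarith)]
    have hD2 : (0 : ℝ) < 4*x^2 + q * ((4*x^2 + 2*x + 3/4) - 4*x^2) := by
      nlinarith [mul_pos hq0 (show (0:ℝ) < 2*x + 3/4 by linarith)]
    have hC : (0 : ℝ) < 4*x^2 := by positivity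
    have bndA := aux_rpow_neg_le hC hA hq1 hD1
    have bndB := aux_rpow_neg_le hC hB hq1 hD2
    obtain ⟨D1, hD1def⟩ : ∃ D1 : ℝ, D1 = 4*x^2 - q * (2*x - 3/4) := ⟨_, rfl⟩
    obtain ⟨D2, hD2def⟩ : ∃ D2 : ℝ, D2 = 4*x^2 + q * (2*x + 3/4) := ⟨_, rfl⟩
    have hD1' : (0:ℝ) < D1 := by rw [hD1def]; nlinarith [hD1]
    have hD2' : (0:ℝ) < D2 := by rw [hD2def]; nlinarith [hD2]
    rw [show (4*x^2 + q * ((4*x^2 - 2*x + 3/4) - 4*x^2) : ℝ) = 4*x^2 - q * (2*x - 3/4) from by ring,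
      ← hD1def] at bndA
    rw [show (4*x^2 + q * ((4*x^2 + 2*x + 3/4) - 4*x^2) : ℝ) = 4*x^2 + q * (2*x + 3/4) from by ring,
      ← hD2def] at bndB
    -- the key rational inequality
    have hrat : (4*x - 1) * ((4*x^2) / D1) + (4*x + 1) * ((4*x^2) / D2) < 8*x := by
      have t1 : (0:ℝ) < q * (5 - 4*q) := mul_pos hq0 (by linarith)
      have t2 : (0:ℝ) < 8*x^2 * (q * (5 - 4*q)) := mul_pos (by positivity) t1
      have t3 : (0:ℝ) < (9/2) * q^2 := by positivity
      have hkey : (0:ℝ) < x * ((9/2)*q^2 + 8*x^2 * (q * (5 - 4*q))) :=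
        mul_pos (by linarith) (by linarith)
      have hpoly : (4*x - 1) * (4*x^2) * D2 + (4*x + 1) * (4*x^2) * D1 < 8*x * (D1 * D2) := by
        rw [hD1def, hD2def]; linarith [hkey]
      rw [mul_div_assoc', mul_div_assoc', div_add_div _ _ hD1'.ne' hD2'.ne',
        div_lt_iff₀ (mul_pos hD1' hD2')]
      linarith [hpoly]
    -- combine
    have hCq : (0 : ℝ) < (4*x^2 : ℝ) ^ (-q) := Real.rpow_pos_of_pos hC _
    have key : (4*x - 1) * (4*x^2 - 2*x + 3/4) ^ (-q) + (4*x + 1) * (4*x^2 + 2*x + 3/4) ^ (-q)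
        < 4 * (2*x) ^ (1 - 2*q) := by
      calc (4*x - 1) * (4*x^2 - 2*x + 3/4) ^ (-q) + (4*x + 1) * (4*x^2 + 2*x + 3/4) ^ (-q)
          ≤ (4*x - 1) * ((4*x^2) ^ (-q) * ((4*x^2) / D1))
            + (4*x + 1) * ((4*x^2) ^ (-q) * ((4*x^2) / D2)) := by
            gcongr <;> linarith
        _ = ((4*x - 1) * ((4*x^2) / D1) + (4*x + 1) * ((4*x^2) / D2)) * (4*x^2 : ℝ) ^ (-q) := by
            ring
        _ < (8*x) * (4*x^2 : ℝ) ^ (-q) := mul_lt_mul_of_pos_right hrat hCq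
        _ = 4 * (2*x) ^ (1 - 2*q) := by rw [hsplit]; ring
    -- conclude
    have hfin : 2 * (-(2 : ℝ)/p) * (2*x) ^ (1 - 2*q)
        - 1/2 * ((8*x - 2) * (-(1 : ℝ)/p) * (4*x^2 - 2*x + 3/4) ^ (-q))
        - 1/2 * ((8*x + 2) * (-(1 : ℝ)/p) * (4*x^2 + 2*x + 3/4) ^ (-q))
        = ((4*x - 1) * (4*x^2 - 2*x + 3/4) ^ (-q) + (4*x + 1) * (4*x^2 + 2*x + 3/4) ^ (-q)
            - 4 * (2*x) ^ (1 - 2*q)) / p := by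
      field_simp
      ring
    rw [hfin]
    exact div_neg_of_neg_of_pos (by linarith [key]) hp0
end
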